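/- Let W, W̃ ∈ ℂ^{n×n} with W̃ a min ε-approximation of W for ε ∈ (0,1). Let F ⊆ [n] be such that I_{|F|} − W_{FF} and I_{|F|} − W̃_{FF} are invertible, and let C = [n] \ F. Then I_{|C|} − Sc(I_n − W̃, C) is a min ε-approximation of I_{|C|} − Sc(I_n − W, C) (with no loss in the approximation parameter). -/

import Mathlib

/-!
Write `M = I − W`, `M̃ = I − W̃`. For `y` on `C` let `ŷ` be its harmonic extension with respect to
`M`, i.e. `ŷ_F = −M_FF⁻¹ M_FC y`; then `M ŷ` vanishes on `F` and equals `Sc(M, C) y` on `C`, so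
`u* M ŷ = u_C* Sc(M, C) y` for every `u`, and dually `x̂* M z = x* Sc(M, C) z_C` when `x̂` is the
harmonic extension of `x` with respect to `M*`. Testing the hypothesis on the extension of `x`
with respect to `M*` and that of `y` with respect to `M̃` turns `x*(W − W̃)y` and the first term of
the min into exactly their Schur complement counterparts; swapping the roles of `M` and `M̃` does
the same for the second term.
-/

open Matrix

noncomputable section

/-- The sesquilinear form `x* A y`. -/
def sesq {m : Type*} [Fintype m] (A : Matrix m m ℂ) (x y : m → ℂ) : ℂ :=
  star x ⬝ᵥ (A *ᵥ y)

/-- The symmetrization `U_A = (A + A*)/2` of a complex square matrix. -/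
def csym {m : Type*} [Fintype m] (A : Matrix m m ℂ) : Matrix m m ℂ :=
  (1 / 2 : ℂ) • (A + Aᴴ)

/-- `W̃` is a *min ε-approximation* of `W`: for all `x, y`,
`|x*(W − W̃)y| ≤ (ε/2)·min{x*U_{I−W}x + y*U_{I−W̃}y, y*U_{I−W}y + x*U_{I−W̃}x}`. -/
def MinApprox {m : Type*} [Fintype m] [DecidableEq m] (ε : ℝ)
    (W Wt : Matrix m m ℂ) : Prop :=
  ∀ x y : m → ℂ,
    ‖sesq (W - Wt) x y‖ ≤
      ε / 2 *
        min ((sesq (csym (1 - W)) x x).re + (sesq (csym (1 - Wt)) y y).re)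
          ((sesq (csym (1 - W)) y y).re + (sesq (csym (1 - Wt)) x x).re)

/-- The Schur complement `Sc(M, C) = M_CC − M_CF M_FF⁻¹ M_FC` of `M` onto the
set `C = {i | ¬ p i}`, where `F = {i | p i}`. -/
def schurC {n : ℕ} (M : Matrix (Fin n) (Fin n) ℂ) (p : Fin n → Prop)
    [DecidablePred p] : Matrix {i : Fin n // ¬ p i} {i : Fin n // ¬ p i} ℂ :=
  M.submatrix (fun i : {i : Fin n // ¬ p i} => i.1) (fun j : {j : Fin n // ¬ p j} => j.1) -
    M.submatrix (fun i : {i : Fin n // ¬ p i} => i.1) (fun j : {j : Fin n // p j} => j.1) *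
      (M.submatrix (fun i : {i : Fin n // p i} => i.1) (fun j : {j : Fin n // p j} => j.1))⁻¹ *
      M.submatrix (fun i : {i : Fin n // p i} => i.1) (fun j : {j : Fin n // ¬ p j} => j.1)

section Sesq

variable {m : Type*} [Fintype m]

lemma sesq_sub (A B : Matrix m m ℂ) (x y : m → ℂ) :
    sesq (A - B) x y = sesq A x y - sesq B x y := by
  simp only [sesq, sub_mulVec, dotProduct_sub]

lemma sesq_conjTranspose (A : Matrix m m ℂ) (x y : m → ℂ) :
    sesq Aᴴ x y = star (sesq A y x) := by
  rw [sesq, sesq, star_dotProduct, star_mulVec, conjTranspose_conjTranspose, dotProduct_mulVec]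

lemma norm_sesq_sub_comm (A B : Matrix m m ℂ) (x y : m → ℂ) :
    ‖sesq (A - B) x y‖ = ‖sesq (B - A) x y‖ := by
  rw [sesq_sub, sesq_sub, norm_sub_rev]

lemma re_sesq_csym (A : Matrix m m ℂ) (x : m → ℂ) :
    (sesq (csym A) x x).re = (sesq A x x).re := by
  have hsplit : sesq (csym A) x x = (1 / 2 : ℂ) * (sesq A x x + sesq Aᴴ x x) := by
    simp only [sesq, csym, smul_mulVec, add_mulVec, dotProduct_smul, dotProduct_add, smul_eq_mul]
  rw [hsplit, sesq_conjTranspose, Complex.star_def, Complex.add_conj]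
  simp

lemma minApprox_iff [DecidableEq m] {ε : ℝ} {W Wt : Matrix m m ℂ} :
    MinApprox ε W Wt ↔ ∀ x y : m → ℂ, ‖sesq ((1 - Wt) - (1 - W)) x y‖ ≤ ε / 2 *
      min ((sesq (1 - W) x x).re + (sesq (1 - Wt) y y).re)
        ((sesq (1 - W) y y).re + (sesq (1 - Wt) x x).re) := by
  simp only [MinApprox, re_sesq_csym, sub_sub_sub_cancel_left]

end Sesq

section Block

variable {ι κ R : Type*} [Fintype ι] [NonUnitalNonAssocSemiring R] (p : ι → Prop) [DecidablePred p]

lemma dotProduct_eq_add_subtype (u v : ι → R) :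
    u ⬝ᵥ v = (u ∘ (↑) : {i // p i} → R) ⬝ᵥ (v ∘ (↑))
      + (u ∘ (↑) : {i // ¬ p i} → R) ⬝ᵥ (v ∘ (↑)) :=
  (Fintype.sum_subtype_add_sum_subtype p fun i => u i * v i).symm

lemma mulVec_comp_val (M : Matrix κ ι R) (q : κ → Prop) (z : ι → R) :
    (M *ᵥ z) ∘ (↑) =
      M.toBlock q p *ᵥ (z ∘ (↑)) + M.toBlock q (fun i => ¬ p i) *ᵥ (z ∘ (↑)) := by
  ext i
  exact dotProduct_eq_add_subtype p _ _

end Block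

lemma toBlock_one_sub {ι R : Type*} [DecidableEq ι] [Ring R] (M : Matrix ι ι R) (p : ι → Prop) :
    (1 - M).toBlock p p = 1 - M.toBlock p p := by
  rw [← toBlock_one_self p]
  rfl

section HarmonicExt

variable {n : ℕ} (M : Matrix (Fin n) (Fin n) ℂ) (p : Fin n → Prop) [DecidablePred p]

lemma schurC_eq_toBlock : schurC M p = M.toBlock (fun i => ¬ p i) (fun i => ¬ p i) -
    M.toBlock (fun i => ¬ p i) p * (M.toBlock p p)⁻¹ * M.toBlock p (fun i => ¬ p i) :=
  rfl

lemma schurC_conjTranspose : (schurC M p)ᴴ = schurC Mᴴ p := by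
  simp only [schurC_eq_toBlock, conjTranspose_sub, conjTranspose_mul, conjTranspose_nonsing_inv,
    toBlock, conjTranspose_submatrix, Matrix.mul_assoc]

def harmonicExt (y : {i // ¬ p i} → ℂ) : Fin n → ℂ := fun i =>
  if h : p i then (-((M.toBlock p p)⁻¹ *ᵥ M.toBlock p (fun i => ¬ p i) *ᵥ y)) ⟨i, h⟩
  else y ⟨i, h⟩

variable {M p}

lemma harmonicExt_comp_val (y : {i // ¬ p i} → ℂ) :
    harmonicExt M p y ∘ (↑) = -((M.toBlock p p)⁻¹ *ᵥ M.toBlock p (fun i => ¬ p i) *ᵥ y) := by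
  ext i
  simp [harmonicExt, i.2]

lemma harmonicExt_comp_val_compl (y : {i // ¬ p i} → ℂ) :
    harmonicExt M p y ∘ (↑) = y := by
  ext i
  simp [harmonicExt, i.2]

lemma mulVec_harmonicExt_comp_val (hM : IsUnit (M.toBlock p p)) (y : {i // ¬ p i} → ℂ) :
    (M *ᵥ harmonicExt M p y) ∘ (Subtype.val : {i // p i} → Fin n) = 0 := by
  rw [mulVec_comp_val p, harmonicExt_comp_val, harmonicExt_comp_val_compl, mulVec_neg,
    mulVec_mulVec, mul_nonsing_inv _ ((isUnit_iff_isUnit_det _).mp hM), one_mulVec,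
    neg_add_cancel]

lemma mulVec_harmonicExt_comp_val_compl (y : {i // ¬ p i} → ℂ) :
    (M *ᵥ harmonicExt M p y) ∘ (Subtype.val : {i // ¬ p i} → Fin n) = schurC M p *ᵥ y := by
  rw [mulVec_comp_val p, harmonicExt_comp_val, harmonicExt_comp_val_compl, schurC_eq_toBlock,
    sub_mulVec, mulVec_neg, mulVec_mulVec, mulVec_mulVec, Matrix.mul_assoc]
  abel

lemma sesq_harmonicExt_right (hM : IsUnit (M.toBlock p p)) (u : Fin n → ℂ)
    (y : {i // ¬ p i} → ℂ) :
    sesq M u (harmonicExt M p y) = sesq (schurC M p) (u ∘ (↑)) y := by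
  rw [sesq, dotProduct_eq_add_subtype p, mulVec_harmonicExt_comp_val hM,
    mulVec_harmonicExt_comp_val_compl, dotProduct_zero, zero_add]
  rfl

lemma sesq_harmonicExt_left (hM : IsUnit (M.toBlock p p)) (x : {i // ¬ p i} → ℂ)
    (z : Fin n → ℂ) :
    sesq M (harmonicExt Mᴴ p x) z = sesq (schurC M p) x (z ∘ (↑)) := by
  have hMH : IsUnit (Mᴴ.toBlock p p) := by
    rwa [toBlock, ← conjTranspose_submatrix, isUnit_conjTranspose]
  calc sesq M (harmonicExt Mᴴ p x) z = star (sesq Mᴴ z (harmonicExt Mᴴ p x)) := by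
        rw [sesq_conjTranspose, star_star]
    _ = star (sesq (schurC Mᴴ p) (z ∘ (↑)) x) := by rw [sesq_harmonicExt_right hMH]
    _ = sesq (schurC M p) x (z ∘ (↑)) := by
        rw [← sesq_conjTranspose, schurC_conjTranspose, conjTranspose_conjTranspose]

theorem norm_sesq_schurC_sub_le {M Mt : Matrix (Fin n) (Fin n) ℂ} (hM : IsUnit (M.toBlock p p))
    (hMt : IsUnit (Mt.toBlock p p)) {c : ℝ}
    (h : ∀ u v, ‖sesq (Mt - M) u v‖ ≤ c * ((sesq M u u).re + (sesq Mt v v).re))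
    (x y : {i // ¬ p i} → ℂ) :
    ‖sesq (schurC Mt p - schurC M p) x y‖ ≤
      c * ((sesq (schurC M p) x x).re + (sesq (schurC Mt p) y y).re) := by
  have hu := harmonicExt_comp_val_compl (M := Mᴴ) x
  have hv := harmonicExt_comp_val_compl (M := Mt) y
  have hext := h (harmonicExt Mᴴ p x) (harmonicExt Mt p y)
  rw [sesq_sub]
  rwa [sesq_sub, sesq_harmonicExt_right hMt, sesq_harmonicExt_left hM,
    sesq_harmonicExt_left hM, sesq_harmonicExt_right hMt, hu, hv] at hext

end HarmonicExt

theorem schur_preserves_min_approx_general {n : ℕ} (ε : ℝ) (h0 : 0 < ε)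
    (W Wt : Matrix (Fin n) (Fin n) ℂ) (p : Fin n → Prop) [DecidablePred p]
    (hW : IsUnit ((1 : Matrix {i : Fin n // p i} {i : Fin n // p i} ℂ) -
      W.submatrix (fun i : {i : Fin n // p i} => i.1) (fun j : {j : Fin n // p j} => j.1)))
    (hWt : IsUnit ((1 : Matrix {i : Fin n // p i} {i : Fin n // p i} ℂ) -
      Wt.submatrix (fun i : {i : Fin n // p i} => i.1) (fun j : {j : Fin n // p j} => j.1)))
    (h : MinApprox ε W Wt) :
    MinApprox ε (1 - schurC (1 - W) p) (1 - schurC (1 - Wt) p) := by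
  have hM : IsUnit ((1 - W).toBlock p p) := by rwa [toBlock_one_sub]
  have hMt : IsUnit ((1 - Wt).toBlock p p) := by rwa [toBlock_one_sub]
  rw [minApprox_iff] at h ⊢
  simp only [sub_sub_cancel, mul_min_of_nonneg _ _ (half_pos h0).le] at h ⊢
  intro x y
  refine le_min (norm_sesq_schurC_sub_le hM hMt (fun u v ↦ (h u v).trans (min_le_left _ _)) x y) ?_
  rw [norm_sesq_sub_comm, add_comm]
  refine norm_sesq_schurC_sub_le hMt hM (fun u v ↦ ?_) x y
  rw [norm_sesq_sub_comm, add_comm]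
  exact (h u v).trans (min_le_right _ _)

/-- Min ε-approximation (`ε ∈ (0,1)`) is preserved exactly by
Schur complements: if `W̃` is a min ε-approximation of `W` and `I − W_FF`,
`I − W̃_FF` are invertible, then `I − Sc(I − W̃, C)` is a min ε-approximation of
`I − Sc(I − W, C)`. -/
theorem schur_preserves_min_approx {n : ℕ} (ε : ℝ) (h0 : 0 < ε) (h1 : ε < 1)
    (W Wt : Matrix (Fin n) (Fin n) ℂ) (p : Fin n → Prop) [DecidablePred p]
    (hW : IsUnit ((1 : Matrix {i : Fin n // p i} {i : Fin n // p i} ℂ) -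
      W.submatrix (fun i : {i : Fin n // p i} => i.1) (fun j : {j : Fin n // p j} => j.1)))
    (hWt : IsUnit ((1 : Matrix {i : Fin n // p i} {i : Fin n // p i} ℂ) -
      Wt.submatrix (fun i : {i : Fin n // p i} => i.1) (fun j : {j : Fin n // p j} => j.1)))
    (h : MinApprox ε W Wt) :
    MinApprox ε (1 - schurC (1 - W) p) (1 - schurC (1 - Wt) p) :=
  schur_preserves_min_approx_general ε h0 W Wt p hW hWt h

end
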